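/- Let X and Y be vector spaces over ℝ and let f : X → Y satisfy: (i) f(0) = 0, and (ii) there exist a₀, a₁ ∈ X such that f(a₀) and f(a₁) are linearly independent in Y. Then f is ℝ-linear if and only if f satisfies both: (iii) for every line L ⊆ X, the image f '' L is either a point or a line in Y, and (iv) for every line L ⊆ X, if f '' L is a line in Y then the restriction of f to L is injective. -/

import Mathlib

def IsLine {X : Type*} [AddCommGroup X] [Module ℝ X] (L : Set X) : Prop :=
  ∃ o d : X, d ≠ 0 ∧ L = {x | ∃ r : ℝ, x = r • d + o}

def IsPoint {X : Type*} (S : Set X) : Prop := ∃ p : X, S = {p}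

/-!
Linear maps clearly satisfy (iii) and (iv). Conversely, (iii) and (iv) say that `f` maps the line
through `p` and `q` into the line through `f p` and `f q`, bijectively when `f p ≠ f q`, and this
property survives translations of `X` and `Y`.

Let `g` be such a map with `g 0 = 0` and `g u`, `g v` linearly independent, and write
`g (t • d) = σ_d(t) • g d`. Since `a • u + b • v` is the midpoint of `(2a) • u` and `(2b) • v`, `g`
maps the plane spanned by `u`, `v` into the plane spanned by `g u`, `g v`. The image of the line
`a • u + ℝ • v` avoids `ℝ • g v`, so it is parallel to it, whence
`g (a • u + b • v) = σ_u(a) • g u + σ_v(b) • g v`. Evaluated on the lines `ℝ • (u + c • v)` and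
through `u` and `v`, this shows that `σ_u = σ_v` is multiplicative with `σ(1 - s) = 1 - σ(s)`: a ring
endomorphism of `ℝ`, hence the identity.

As `0`, `f a₀`, `f a₁` are not collinear, every line through `p`, `q` with `f p ≠ f q` lies in a
plane on which the translate `x ↦ f (x + p) - f p` is such a `g`. So `f` is affine on every line,
which together with `f 0 = 0` means linear.
-/

open Set Function

section Lines

variable {X : Type*} [AddCommGroup X] [Module ℝ X]

def lineThrough (p q : X) : Set X := {x | ∃ t : ℝ, x = t • (q - p) + p}

lemma left_mem_lineThrough (p q : X) : p ∈ lineThrough p q := ⟨0, by simp⟩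

lemma right_mem_lineThrough (p q : X) : q ∈ lineThrough p q := ⟨1, by simp⟩

lemma lineThrough_self (p : X) : lineThrough p p = {p} := by
  ext x
  simp [lineThrough]

lemma isLine_lineThrough {p q : X} (h : p ≠ q) : IsLine (lineThrough p q) :=
  ⟨p, q - p, sub_ne_zero.2 h.symm, rfl⟩

lemma IsLine.nontrivial {L : Set X} (hL : IsLine L) : L.Nontrivial := by
  obtain ⟨o, d, hd, rfl⟩ := hL
  exact ⟨0 • d + o, ⟨0, rfl⟩, 1 • d + o, ⟨1, rfl⟩, by simpa [eq_comm] using hd⟩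

lemma IsLine.eq_lineThrough {L : Set X} (hL : IsLine L) {p q : X} (hp : p ∈ L) (hq : q ∈ L)
    (hpq : p ≠ q) : L = lineThrough p q := by
  obtain ⟨o, d, -, rfl⟩ := hL
  obtain ⟨a, rfl⟩ := hp
  obtain ⟨b, rfl⟩ := hq
  have hab : b - a ≠ 0 := sub_ne_zero.2 fun h => hpq (by rw [h])
  ext x
  constructor
  · rintro ⟨r, rfl⟩
    refine ⟨(r - a) / (b - a), ?_⟩
    rw [show b • d + o - (a • d + o) = (b - a) • d by module, smul_smul,
      div_mul_cancel₀ _ hab]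
    module
  · rintro ⟨t, rfl⟩
    exact ⟨t * (b - a) + a, by module⟩

end Lines

section LinearMaps

variable {X Y : Type*} [AddCommGroup X] [Module ℝ X] [AddCommGroup Y] [Module ℝ Y]
  {f : X → Y}

lemma IsLinearMap.image_line (hf : IsLinearMap ℝ f) (o d : X) :
    f '' {x | ∃ r : ℝ, x = r • d + o} = {y | ∃ r : ℝ, y = r • f d + f o} := by
  ext y
  constructor
  · rintro ⟨_, ⟨r, rfl⟩, rfl⟩
    exact ⟨r, by rw [hf.map_add, hf.map_smul]⟩
  · rintro ⟨r, rfl⟩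
    exact ⟨r • d + o, ⟨r, rfl⟩, by rw [hf.map_add, hf.map_smul]⟩

lemma IsLinearMap.isPoint_or_isLine_image (hf : IsLinearMap ℝ f) {L : Set X} (hL : IsLine L) :
    IsPoint (f '' L) ∨ IsLine (f '' L) := by
  obtain ⟨o, d, -, rfl⟩ := hL
  rw [hf.image_line]
  by_cases hd : f d = 0
  · exact Or.inl ⟨f o, by simp [hd]⟩
  · exact Or.inr ⟨f o, f d, hd, rfl⟩

lemma IsLinearMap.injOn_of_isLine_image (hf : IsLinearMap ℝ f) {L : Set X} (hL : IsLine L)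
    (himage : IsLine (f '' L)) : InjOn f L := by
  obtain ⟨o, d, -, rfl⟩ := hL
  have hd : f d ≠ 0 := by
    rintro hd
    rw [hf.image_line] at himage
    simpa [hd] using himage.nontrivial
  rintro _ ⟨r, rfl⟩ _ ⟨s, rfl⟩ h
  rw [hf.map_add, hf.map_add, hf.map_smul, hf.map_smul, add_left_inj] at h
  rw [smul_left_injective ℝ hd h]

end LinearMaps

section LinePreserving

variable {X Y : Type*} [AddCommGroup X] [Module ℝ X] [AddCommGroup Y] [Module ℝ Y]
  {f : X → Y}

structure LinePreserving (f : X → Y) : Prop where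
  mapsTo (p q : X) : MapsTo f (lineThrough p q) (lineThrough (f p) (f q))
  injOn {p q : X} : f p ≠ f q → InjOn f (lineThrough p q)
  surjOn {p q : X} : f p ≠ f q → SurjOn f (lineThrough p q) (lineThrough (f p) (f q))

lemma image_lineThrough_of_ne
    (himage : ∀ L : Set X, IsLine L → IsPoint (f '' L) ∨ IsLine (f '' L))
    (hinj : ∀ L : Set X, IsLine L → IsLine (f '' L) → InjOn f L) {p q : X} (h : f p ≠ f q) :
    f '' lineThrough p q = lineThrough (f p) (f q) ∧ InjOn f (lineThrough p q) := by
  have hpq : p ≠ q := fun e => h (congrArg f e)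
  have hp := mem_image_of_mem f (left_mem_lineThrough p q)
  have hq := mem_image_of_mem f (right_mem_lineThrough p q)
  rcases himage _ (isLine_lineThrough hpq) with ⟨y, hy⟩ | hline
  · rw [hy, mem_singleton_iff] at hp hq
    exact absurd (hp.trans hq.symm) h
  · exact ⟨hline.eq_lineThrough hp hq h, hinj _ (isLine_lineThrough hpq) hline⟩

lemma mapsTo_lineThrough_of_eq
    (himage : ∀ L : Set X, IsLine L → IsPoint (f '' L) ∨ IsLine (f '' L))
    (hinj : ∀ L : Set X, IsLine L → IsLine (f '' L) → InjOn f L) {p q : X} (h : f p = f q) :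
    MapsTo f (lineThrough p q) {f p} := by
  rcases eq_or_ne p q with rfl | hpq
  · rw [lineThrough_self]
    exact mapsTo_singleton.2 rfl
  rcases himage _ (isLine_lineThrough hpq) with ⟨y, hy⟩ | hline
  · have hp := mem_image_of_mem f (left_mem_lineThrough p q)
    rw [hy, mem_singleton_iff] at hp
    rw [hp, ← hy]
    exact mapsTo_image f _
  · exact absurd (hinj _ (isLine_lineThrough hpq) hline (left_mem_lineThrough p q)
      (right_mem_lineThrough p q) h) hpq

lemma LinePreserving.of_image
    (himage : ∀ L : Set X, IsLine L → IsPoint (f '' L) ∨ IsLine (f '' L))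
    (hinj : ∀ L : Set X, IsLine L → IsLine (f '' L) → InjOn f L) : LinePreserving f where
  mapsTo p q := by
    by_cases h : f p = f q
    · rw [← h, lineThrough_self]
      exact mapsTo_lineThrough_of_eq himage hinj h
    · exact (image_lineThrough_of_ne himage hinj h).1 ▸ mapsTo_image f _
  injOn h := (image_lineThrough_of_ne himage hinj h).2
  surjOn h := (image_lineThrough_of_ne himage hinj h).1.symm.subset

lemma LinePreserving.exists_apply_eq (hf : LinePreserving f) (p q : X) (t : ℝ) :
    ∃ r : ℝ, f (t • (q - p) + p) = r • (f q - f p) + f p :=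
  hf.mapsTo p q ⟨t, rfl⟩

lemma LinePreserving.translate (hf : LinePreserving f) (p : X) :
    LinePreserving fun x => f (x + p) - f p where
  mapsTo a b := by
    rintro _ ⟨t, rfl⟩
    obtain ⟨r, hr⟩ := hf.exists_apply_eq (a + p) (b + p) t
    refine ⟨r, ?_⟩
    dsimp only
    rw [show t • (b - a) + a + p = t • (b + p - (a + p)) + (a + p) by module, hr]
    module
  injOn {a b} h := by
    have h' : f (a + p) ≠ f (b + p) := fun e => h (by rw [e])
    rintro _ ⟨t, rfl⟩ _ ⟨s, rfl⟩ hts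
    have hmem : ∀ c : ℝ, c • (b - a) + a + p ∈ lineThrough (a + p) (b + p) :=
      fun c => ⟨c, by module⟩
    exact add_right_cancel (hf.injOn h' (hmem t) (hmem s) (sub_left_inj.1 hts))
  surjOn {a b} h := by
    have h' : f (a + p) ≠ f (b + p) := fun e => h (by rw [e])
    rintro _ ⟨r, rfl⟩
    obtain ⟨_, ⟨t, rfl⟩, hx⟩ := hf.surjOn h' ⟨r, rfl⟩
    refine ⟨t • (b - a) + a, ⟨t, rfl⟩, ?_⟩
    dsimp only
    rw [show t • (b - a) + a + p = t • (b + p - (a + p)) + (a + p) by module, hx]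
    module

end LinePreserving

lemma eq_id_of_map_mul_of_map_one_sub {σ : ℝ → ℝ} (h1 : σ 1 = 1)
    (hmul : ∀ a b, σ (a * b) = σ a * σ b) (hsub : ∀ s, σ (1 - s) + σ s = 1) : σ = id := by
  have h0 : σ 0 = 0 := by
    have := hsub 1
    rw [sub_self, h1] at this
    linarith
  have hneg1 : σ (-1) = -1 := by
    have hsq : σ (-1) * σ (-1) = 1 := by rw [← hmul, neg_one_mul, neg_neg, h1]
    refine (mul_self_eq_one_iff.1 hsq).resolve_left fun h => ?_
    have h2 : σ 2 = 0 := by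
      have := hsub (-1)
      rw [h, sub_neg_eq_add, one_add_one_eq_two] at this
      linarith
    have := hmul 2 2⁻¹
    rw [mul_inv_cancel₀ two_ne_zero, h1, h2, zero_mul] at this
    exact one_ne_zero this
  have hadd : ∀ a b, σ (a + b) = σ a + σ b := by
    intro a b
    rcases eq_or_ne b 0 with rfl | hb
    · rw [add_zero, h0, add_zero]
    have hneg : σ (-(a / b)) = -σ (a / b) := by rw [neg_eq_neg_one_mul, hmul, hneg1, neg_one_mul]
    calc σ (a + b) = σ b * σ (1 - -(a / b)) := by
          rw [← hmul]
          congr 1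
          field_simp
          ring
      _ = σ b * (1 + σ (a / b)) := by rw [eq_sub_of_add_eq (hsub _), hneg, sub_neg_eq_add]
      _ = σ a + σ b := by rw [mul_add, mul_one, ← hmul, mul_div_cancel₀ _ hb, add_comm]
  let φ : ℝ →+* ℝ :=
    { toFun := σ, map_one' := h1, map_mul' := hmul, map_zero' := h0, map_add' := hadd }
  funext x
  exact RingHom.congr_fun (Subsingleton.elim φ (RingHom.id ℝ)) x

section Grid

variable {X Y : Type*} [AddCommGroup X] [Module ℝ X] [AddCommGroup Y] [Module ℝ Y]
  {g : X → Y} {u v : X}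

-- `σ_d` in the sketch above
noncomputable def rayCoord (g : X → Y) (d : X) (t : ℝ) : ℝ :=
  Classical.epsilon fun r : ℝ => g (t • d) = r • g d

lemma LinePreserving.apply_smul (hg : LinePreserving g) (hg0 : g 0 = 0) (d : X) (t : ℝ) :
    g (t • d) = rayCoord g d t • g d := by
  obtain ⟨r, hr⟩ := hg.exists_apply_eq 0 d t
  rw [sub_zero, add_zero, hg0, sub_zero, add_zero] at hr
  exact Classical.epsilon_spec (p := fun r : ℝ => g (t • d) = r • g d) ⟨r, hr⟩

lemma LinePreserving.rayCoord_zero (hg : LinePreserving g) (hg0 : g 0 = 0) {d : X}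
    (hd : g d ≠ 0) : rayCoord g d 0 = 0 := by
  have h := hg.apply_smul hg0 d 0
  rw [zero_smul, hg0, eq_comm, smul_eq_zero] at h
  exact h.resolve_right hd

lemma LinePreserving.rayCoord_one (hg : LinePreserving g) (hg0 : g 0 = 0) {d : X}
    (hd : g d ≠ 0) : rayCoord g d 1 = 1 := by
  have h := hg.apply_smul hg0 d 1
  rw [one_smul] at h
  exact smul_left_injective ℝ hd (h.symm.trans (one_smul ℝ _).symm)

lemma LinePreserving.rayCoord_injective (hg : LinePreserving g) (hg0 : g 0 = 0) {d : X}
    (hd : g d ≠ 0) : Injective (rayCoord g d) := by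
  intro t s hts
  have hne : g 0 ≠ g d := by rwa [hg0, ne_comm]
  have hmem : ∀ c : ℝ, c • d ∈ lineThrough 0 d := fun c => ⟨c, by simp⟩
  have h := hg.injOn hne (hmem t) (hmem s) (by rw [hg.apply_smul hg0, hg.apply_smul hg0, hts])
  exact smul_left_injective ℝ (fun h0 => hne (by rw [h0])) h

lemma LinePreserving.exists_apply_smul_add_smul_of_midpoint (hg : LinePreserving g)
    (hg0 : g 0 = 0) (u v : X) (a b : ℝ) : ∃ l : ℝ, g (a • u + b • v) =
      ((1 - l) * rayCoord g u (2 * a)) • g u + (l * rayCoord g v (2 * b)) • g v := by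
  obtain ⟨l, hl⟩ := hg.exists_apply_eq ((2 * a) • u) ((2 * b) • v) (1 / 2)
  refine ⟨l, ?_⟩
  rw [show a • u + b • v = (1 / 2 : ℝ) • ((2 * b) • v - (2 * a) • u) + (2 * a) • u by module,
    hl, hg.apply_smul hg0, hg.apply_smul hg0]
  module

lemma LinePreserving.apply_smul_add_smul_ne_smul (hg : LinePreserving g) (hg0 : g 0 = 0)
    (hi : LinearIndependent ℝ ![g u, g v]) {a : ℝ} (ha : a ≠ 0) (b c : ℝ) :
    g (a • u + b • v) ≠ c • g v := by
  -- the line through `(2a) • u` and `(2b) • v` meets `ℝ • g v` only at `g ((2b) • v)`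
  intro h
  have hσ : rayCoord g u (2 * a) ≠ 0 := by
    rw [← hg.rayCoord_zero hg0 (hi.ne_zero 0), (hg.rayCoord_injective hg0 (hi.ne_zero 0)).ne_iff]
    simpa using ha
  obtain ⟨l, hl⟩ := hg.exists_apply_smul_add_smul_of_midpoint hg0 u v a b
  have hl1 : l = 1 := by
    have := (hi.eq_of_pair (s' := 0) (t' := c) (by rw [← hl, h, zero_smul, zero_add])).1
    linarith [(mul_eq_zero.1 this).resolve_right hσ]
  have hpq : g ((2 * a) • u) ≠ g ((2 * b) • v) := by
    rw [hg.apply_smul hg0, hg.apply_smul hg0]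
    exact fun e => hσ (hi.eq_zero_of_pair' e).1
  have hmid := hg.injOn hpq (x₁ := a • u + b • v) ⟨1 / 2, by module⟩ (right_mem_lineThrough _ _)
    (by rw [hl, hl1, hg.apply_smul hg0 v]; simp)
  exact hpq (congrArg g (by linear_combination (norm := module) (2 : ℝ) • hmid))

lemma LinePreserving.exists_apply_smul_add_smul_eq_rayCoord_add (hg : LinePreserving g)
    (hg0 : g 0 = 0) (hi : LinearIndependent ℝ ![g u, g v]) (a b : ℝ) :
    ∃ s : ℝ, g (a • u + b • v) = rayCoord g u a • g u + s • g v := by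
  rcases eq_or_ne a 0 with rfl | ha
  · refine ⟨rayCoord g v b, ?_⟩
    rw [zero_smul, zero_add, hg.apply_smul hg0, hg.rayCoord_zero hg0 (hi.ne_zero 0), zero_smul,
      zero_add]
  -- `x • g u + y • g v` is the direction of the image of the line `a • u + ℝ • v`; as that
  -- image misses `ℝ • g v`, `x = 0`
  obtain ⟨l, hl⟩ := hg.exists_apply_smul_add_smul_of_midpoint hg0 u v a 1
  set x := (1 - l) * rayCoord g u (2 * a) - rayCoord g u a
  set y := l * rayCoord g v (2 * 1)
  have hdiff : g (a • u + (1 : ℝ) • v) - g (a • u) = x • g u + y • g v := by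
    rw [hl, hg.apply_smul hg0]
    module
  rcases eq_or_ne x 0 with hx | hx
  · obtain ⟨r, hr⟩ := hg.exists_apply_eq (a • u) (a • u + (1 : ℝ) • v) b
    refine ⟨r * y, ?_⟩
    rw [show a • u + b • v = b • (a • u + (1 : ℝ) • v - a • u) + a • u by module, hr, hdiff, hx,
      hg.apply_smul hg0]
    module
  · have hne : g (a • u) ≠ g (a • u + (1 : ℝ) • v) := by
      intro e
      rw [← e, sub_self] at hdiff
      exact hx (hi.eq_zero_of_pair hdiff.symm).1
    obtain ⟨_, ⟨t, rfl⟩, ht⟩ := hg.surjOn hne ⟨-rayCoord g u a / x, rfl⟩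
    refine absurd ?_ (hg.apply_smul_add_smul_ne_smul hg0 hi ha t (-rayCoord g u a / x * y))
    rw [show a • u + t • v = t • (a • u + (1 : ℝ) • v - a • u) + a • u by module, ht, hdiff,
      hg.apply_smul hg0]
    match_scalars
    · field_simp
      ring
    · ring

lemma LinePreserving.apply_smul_add_smul_eq_rayCoord (hg : LinePreserving g) (hg0 : g 0 = 0)
    (hi : LinearIndependent ℝ ![g u, g v]) (a b : ℝ) :
    g (a • u + b • v) = rayCoord g u a • g u + rayCoord g v b • g v := by
  obtain ⟨s, hs⟩ := hg.exists_apply_smul_add_smul_eq_rayCoord_add hg0 hi a b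
  obtain ⟨s', hs'⟩ := hg.exists_apply_smul_add_smul_eq_rayCoord_add hg0
    (LinearIndependent.pair_symm_iff.1 hi) b a
  rw [add_comm, add_comm (rayCoord g v b • g v)] at hs'
  rw [hs, (hi.eq_of_pair (hs.symm.trans hs')).2]

lemma LinePreserving.rayCoord_eq (hg : LinePreserving g) (hg0 : g 0 = 0)
    (hi : LinearIndependent ℝ ![g u, g v]) : rayCoord g u = rayCoord g v := by
  funext t
  have hsum : g (u + v) = g u + g v := by
    simpa [hg.rayCoord_one hg0 (hi.ne_zero 0), hg.rayCoord_one hg0 (hi.ne_zero 1)] using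
      hg.apply_smul_add_smul_eq_rayCoord hg0 hi 1 1
  have h := hg.apply_smul hg0 (u + v) t
  rw [smul_add, hg.apply_smul_add_smul_eq_rayCoord hg0 hi, hsum, smul_add] at h
  have := hi.eq_of_pair h
  exact this.1.trans this.2.symm

lemma LinePreserving.rayCoord_mul (hg : LinePreserving g) (hg0 : g 0 = 0)
    (hi : LinearIndependent ℝ ![g u, g v]) (t c : ℝ) :
    rayCoord g v (t * c) = rayCoord g u t * rayCoord g v c := by
  have hw : g (u + c • v) = g u + rayCoord g v c • g v := by
    simpa [hg.rayCoord_one hg0 (hi.ne_zero 0)] using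
      hg.apply_smul_add_smul_eq_rayCoord hg0 hi 1 c
  have h := hg.apply_smul hg0 (u + c • v) t
  rw [smul_add, smul_smul, hg.apply_smul_add_smul_eq_rayCoord hg0 hi, hw, smul_add,
    smul_smul] at h
  have := hi.eq_of_pair h
  rw [this.2, ← this.1]

lemma LinePreserving.rayCoord_one_sub_add (hg : LinePreserving g) (hg0 : g 0 = 0)
    (hi : LinearIndependent ℝ ![g u, g v]) (s : ℝ) :
    rayCoord g u (1 - s) + rayCoord g v s = 1 := by
  obtain ⟨r, hr⟩ := hg.exists_apply_eq u v s
  rw [show s • (v - u) + u = (1 - s) • u + s • v by module,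
    hg.apply_smul_add_smul_eq_rayCoord hg0 hi,
    show r • (g v - g u) + g u = (1 - r) • g u + r • g v by module] at hr
  have := hi.eq_of_pair hr
  linarith

lemma LinePreserving.apply_smul_add_smul (hg : LinePreserving g) (hg0 : g 0 = 0)
    (hi : LinearIndependent ℝ ![g u, g v]) (a b : ℝ) :
    g (a • u + b • v) = a • g u + b • g v := by
  have hσ := hg.rayCoord_eq hg0 hi
  have hid : rayCoord g u = id := by
    refine eq_id_of_map_mul_of_map_one_sub (hg.rayCoord_one hg0 (hi.ne_zero 0)) (fun t c => ?_)
      (fun s => ?_)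
    · have h := hg.rayCoord_mul hg0 hi t c
      rwa [← hσ] at h
    · have h := hg.rayCoord_one_sub_add hg0 hi s
      rwa [← hσ] at h
  rw [hg.apply_smul_add_smul_eq_rayCoord hg0 hi, ← hσ, hid, id, id]

end Grid

lemma exists_linearIndependent_pair_sub {K V : Type*} [Field K] [AddCommGroup V] [Module K V]
    {b₀ b₁ y y' : V} (hb : LinearIndependent K ![b₀, b₁]) (hy : y ≠ y') :
    ∃ z ∈ ({0, b₀, b₁} : Set V), LinearIndependent K ![y' - y, z - y] := by
  by_contra! h
  have hcoef : ∀ z ∈ ({0, b₀, b₁} : Set V), ∃ c : K, c • (y' - y) = z - y := fun z hz => by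
    simpa [LinearIndependent.pair_iff' (sub_ne_zero.2 hy.symm)] using h z hz
  obtain ⟨c, hc⟩ := hcoef 0 (by simp)
  obtain ⟨c₀, hc₀⟩ := hcoef b₀ (by simp)
  obtain ⟨c₁, hc₁⟩ := hcoef b₁ (by simp)
  have hdep := hb.eq_zero_of_pair (s := c₁ - c) (t := -(c₀ - c))
    (by linear_combination (norm := module) (c - c₁) • hc₀ + (c₀ - c) • hc₁ + (c₁ - c₀) • hc)
  obtain rfl : c₀ = c := sub_eq_zero.1 (neg_eq_zero.1 hdep.2)
  have hb₀ : b₀ = 0 := by linear_combination (norm := module) hc - hc₀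
  exact hb.ne_zero 0 hb₀

section Affine

variable {X Y : Type*} [AddCommGroup X] [Module ℝ X] [AddCommGroup Y] [Module ℝ Y]
  {f : X → Y}

lemma LinePreserving.apply_smul_sub_add_of_linearIndependent (hf : LinePreserving f)
    {p q w : X} (hi : LinearIndependent ℝ ![f q - f p, f w - f p]) (t : ℝ) :
    f (t • (q - p) + p) = t • (f q - f p) + f p := by
  have h := (hf.translate p).apply_smul_add_smul (u := q - p) (v := w - p) (by simp)
    (by simpa using hi) t 0
  simp only [zero_smul, add_zero, sub_add_cancel] at h
  exact eq_add_of_sub_eq h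

lemma LinePreserving.apply_smul_sub_add (hf : LinePreserving f) (h0 : f 0 = 0) {a₀ a₁ : X}
    (hind : LinearIndependent ℝ ![f a₀, f a₁]) (p q : X) (t : ℝ) :
    f (t • (q - p) + p) = t • (f q - f p) + f p := by
  rcases eq_or_ne (f p) (f q) with hpq | hpq
  · obtain ⟨r, hr⟩ := hf.exists_apply_eq p q t
    rw [hr, hpq, sub_self, smul_zero, smul_zero]
  obtain ⟨z, hz, hi⟩ := exists_linearIndependent_pair_sub hind hpq
  obtain ⟨w, rfl⟩ : z ∈ range f := by
    rcases hz with rfl | rfl | rfl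
    exacts [⟨0, h0⟩, ⟨a₀, rfl⟩, ⟨a₁, rfl⟩]
  exact hf.apply_smul_sub_add_of_linearIndependent hi t

lemma LinePreserving.isLinearMap (hf : LinePreserving f) (h0 : f 0 = 0) {a₀ a₁ : X}
    (hind : LinearIndependent ℝ ![f a₀, f a₁]) : IsLinearMap ℝ f := by
  have hsmul (c : ℝ) (x : X) : f (c • x) = c • f x := by
    simpa [h0] using hf.apply_smul_sub_add h0 hind 0 x c
  refine ⟨fun x y => ?_, hsmul⟩
  calc f (x + y) = (2 : ℝ) • f ((1 / 2 : ℝ) • (y - x) + x) := by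
        rw [← hsmul]
        congr 1
        module
    _ = f x + f y := by
        rw [hf.apply_smul_sub_add h0 hind]
        module

end Affine

theorem linear_iff_line_preserving
    {X Y : Type*} [AddCommGroup X] [Module ℝ X] [AddCommGroup Y] [Module ℝ Y]
    (f : X → Y) (h0 : f 0 = 0)
    (hind : ∃ a₀ a₁ : X, ∀ r s : ℝ, r • f a₀ + s • f a₁ = 0 → r = 0 ∧ s = 0) :
    ((∀ (c : ℝ) (a : X), f (c • a) = c • f a) ∧
        (∀ a b : X, f (a + b) = f a + f b)) ↔
      ((∀ L : Set X, IsLine L → IsPoint (f '' L) ∨ IsLine (f '' L)) ∧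
        (∀ L : Set X, IsLine L → IsLine (f '' L) → Set.InjOn f L)) := by
  obtain ⟨a₀, a₁, hind⟩ := hind
  constructor
  · rintro ⟨hsmul, hadd⟩
    have hf : IsLinearMap ℝ f := ⟨hadd, hsmul⟩
    exact ⟨fun L hL => hf.isPoint_or_isLine_image hL, fun L hL => hf.injOn_of_isLine_image hL⟩
  · rintro ⟨himage, hinj⟩
    have hf := (LinePreserving.of_image himage hinj).isLinearMap h0
      (LinearIndependent.pair_iff.2 hind)
    exact ⟨hf.map_smul, hf.map_add⟩
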